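/- arXiv:2201.05223 — 4 statements merged into one kernel-verified Lean document; each statement's English description precedes it below -/
import Mathlib

section
/- Let γ > 0, κ₀ > 0, ρ ≥ 0, and 0 < ε < x₁. Let m : ℝ × ℝ → [0,∞) be measurable with ∫_ℝ m(x,y) dy = 1 for every x ∈ ℝ and m(x,y) ≥ κ₀ · 1_{(x−ε,x+ε)}(y) for all x, y ∈ ℝ. Let h : ℝ → ℝ be continuous and assume γ κ₀ ε³ ≥ 12 ρ x₁. Define ψ₀(x) = ((1 − x²/x₁²)₊)², Lφ(x) = ρ φ'(x) + γ ∫_ℝ (φ(y) − φ(x)) m(x,y) dy, and β₀ = inf_{x ∈ (−x₁,x₁)} h(x) − γ. Then for every x ∈ ℝ: Lψ₀(x) + h(x) ψ₀(x) ≥ β₀ ψ₀(x). -/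
/-!
Since `|ψ₀'| ≤ 4/x₁`, the drift term costs at most `4ρ/x₁`. For `|x| < x₁` the window
`(x - ε, x + ε)` contains an interval `[a, a + ε]` (or its mirror image) with `0 ≤ a` and
`a + ε ≤ x₁`, on which `ψ₀(y) ≥ ((a + ε - y)/x₁)²`; so the kernel bound gives
`∫ ψ₀(y) m(x,y) dy ≥ κ₀ ε³/(3x₁²)`, and `γ κ₀ ε³ ≥ 12 ρ x₁` makes this jump gain pay for the
drift. What remains is `(h(x) - γ) ψ₀(x) ≥ β₀ ψ₀(x)`. For `|x| ≥ x₁` both `ψ₀` and `ψ₀'`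
vanish and the jump term is nonnegative.
-/

open MeasureTheory Set

lemma hasDerivAt_max_zero_sq (t : ℝ) :
    HasDerivAt (fun s : ℝ => max s 0 ^ 2) (2 * max t 0) t := by
  refine hasDerivAt_of_hasDerivAt_of_ne' (g := fun s => 2 * max s 0) (x := 0)
    (fun y hy => ?_) (by fun_prop) (by fun_prop) t
  rcases hy.lt_or_gt with hy | hy
  · have : (fun s : ℝ => max s 0 ^ 2) =ᶠ[nhds y] fun _ => 0 := by
      filter_upwards [Iio_mem_nhds hy] with s (hs : s < 0)
      simp [max_eq_right hs.le]
    simpa [max_eq_right hy.le] using (hasDerivAt_const y (0 : ℝ)).congr_of_eventuallyEq this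
  · have : (fun s : ℝ => max s 0 ^ 2) =ᶠ[nhds y] fun s => s ^ 2 := by
      filter_upwards [Ioi_mem_nhds hy] with s (hs : 0 < s)
      simp [max_eq_left hs.le]
    simpa [max_eq_left hy.le] using (hasDerivAt_pow 2 y).congr_of_eventuallyEq this

noncomputable def bump (r x : ℝ) : ℝ := max (1 - x ^ 2 / r ^ 2) 0 ^ 2

section bump

variable {r : ℝ}

lemma bump_nonneg (r x : ℝ) : 0 ≤ bump r x := sq_nonneg _

lemma bump_le_one (r x : ℝ) : bump r x ≤ 1 := by
  have : max (1 - x ^ 2 / r ^ 2) 0 ≤ 1 :=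
    max_le (by linarith [div_nonneg (sq_nonneg x) (sq_nonneg r)]) zero_le_one
  unfold bump
  nlinarith [le_max_right (1 - x ^ 2 / r ^ 2) 0]

lemma bump_neg (r x : ℝ) : bump r (-x) = bump r x := by simp [bump]

lemma continuous_bump (r : ℝ) : Continuous (bump r) := by unfold bump; fun_prop

lemma hasDerivAt_bump (r x : ℝ) :
    HasDerivAt (bump r) (-(4 * x / r ^ 2) * max (1 - x ^ 2 / r ^ 2) 0) x := by
  have hu : HasDerivAt (fun x => 1 - x ^ 2 / r ^ 2) (-(2 * x / r ^ 2)) x := by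
    simpa using ((hasDerivAt_pow 2 x).div_const (r ^ 2)).const_sub 1
  exact ((hasDerivAt_max_zero_sq _).comp x hu).congr_deriv (by ring)

lemma one_sub_sq_div_sq_nonpos (hr : 0 < r) {x : ℝ} (hx : r ≤ |x|) :
    1 - x ^ 2 / r ^ 2 ≤ 0 := by
  rw [sub_nonpos, one_le_div (by positivity), ← sq_abs x]
  gcongr

lemma bump_eq_zero_of_le_abs (hr : 0 < r) {x : ℝ} (hx : r ≤ |x|) : bump r x = 0 := by
  simp [bump, max_eq_right (one_sub_sq_div_sq_nonpos hr hx)]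

lemma deriv_bump_eq_zero_of_le_abs (hr : 0 < r) {x : ℝ} (hx : r ≤ |x|) :
    deriv (bump r) x = 0 := by
  rw [(hasDerivAt_bump r x).deriv, max_eq_right (one_sub_sq_div_sq_nonpos hr hx), mul_zero]

lemma abs_deriv_bump_le (hr : 0 < r) (x : ℝ) : |deriv (bump r) x| ≤ 4 / r := by
  rcases le_or_gt r |x| with hx | hx
  · rw [deriv_bump_eq_zero_of_le_abs hr hx, abs_zero]
    positivity
  have hmax : max (1 - x ^ 2 / r ^ 2) 0 ≤ 1 :=
    max_le (by linarith [div_nonneg (sq_nonneg x) (sq_nonneg r)]) zero_le_one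
  rw [(hasDerivAt_bump r x).deriv, abs_mul, abs_neg,
    abs_of_nonneg (le_max_right (1 - x ^ 2 / r ^ 2) (0 : ℝ)), abs_div, abs_mul,
    abs_of_pos (by positivity : (0 : ℝ) < r ^ 2), abs_of_pos (four_pos : (0 : ℝ) < 4)]
  calc 4 * |x| / r ^ 2 * max (1 - x ^ 2 / r ^ 2) 0 ≤ 4 * r / r ^ 2 * 1 := by gcongr
    _ = 4 / r := by field_simp

lemma sq_sub_abs_div_le_bump (hr : 0 < r) {x : ℝ} (hx : |x| ≤ r) :
    ((r - |x|) / r) ^ 2 ≤ bump r x := by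
  have : (r - |x|) / r ≤ 1 - x ^ 2 / r ^ 2 := by
    rw [← sq_abs x, div_le_iff₀ hr]
    field_simp
    nlinarith [abs_nonneg x]
  exact pow_le_pow_left₀ (div_nonneg (by linarith) hr.le) (this.trans (le_max_left _ 0)) 2

lemma le_integral_bump (hr : 0 < r) {a ε : ℝ} (ha : 0 ≤ a) (hε : 0 ≤ ε) (haε : a + ε ≤ r) :
    ε ^ 3 / (3 * r ^ 2) ≤ ∫ y in a..a + ε, bump r y := by
  calc ε ^ 3 / (3 * r ^ 2) = ∫ y in a..a + ε, ((a + ε - y) / r) ^ 2 := by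
        rw [intervalIntegral.integral_comp_sub_left (fun s => (s / r) ^ 2)]
        simp [div_pow, integral_pow]
        ring
    _ ≤ ∫ y in a..a + ε, bump r y := by
      refine intervalIntegral.integral_mono_on (by linarith)
        ((by fun_prop : Continuous fun y => ((a + ε - y) / r) ^ 2).intervalIntegrable _ _)
        ((continuous_bump r).intervalIntegrable _ _) fun y ⟨hay, hyε⟩ => ?_
      have hy : |y| = y := abs_of_nonneg (ha.trans hay)
      calc ((a + ε - y) / r) ^ 2 ≤ ((r - |y|) / r) ^ 2 := by
            gcongr
            linarith
        _ ≤ bump r y := sq_sub_abs_div_le_bump hr (by linarith)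

lemma le_integral_bump_window {ε : ℝ} (hε : 0 < ε) (hεr : ε < r) {x : ℝ} (hx : |x| < r) :
    ε ^ 3 / (3 * r ^ 2) ≤ ∫ y in x - ε..x + ε, bump r y := by
  wlog hx0 : 0 ≤ x generalizing x
  · calc _ ≤ ∫ y in -x - ε..-x + ε, bump r y := this (by rwa [abs_neg]) (by linarith)
      _ = ∫ y in x - ε..x + ε, bump r (-y) := by
        rw [intervalIntegral.integral_comp_neg]
        congr 1 <;> ring
      _ = _ := by simp only [bump_neg]
  have hxr : x < r := (le_abs_self x).trans_lt hx
  calc _ ≤ ∫ y in min x (r - ε)..min x (r - ε) + ε, bump r y :=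
        le_integral_bump (hεr.trans' hε) (le_min hx0 (by linarith)) hε.le
          (by linarith [min_le_right x (r - ε)])
    _ ≤ _ := intervalIntegral.integral_mono_interval (le_min (by linarith) (by linarith))
        (by linarith) (by linarith [min_le_left x (r - ε)]) (ae_of_all _ (bump_nonneg r))
        ((continuous_bump r).intervalIntegrable _ _)

lemma integrable_bump_mul {m : ℝ → ℝ} (r : ℝ) (hm : Integrable m) :
    Integrable fun y => bump r y * m y :=
  hm.bdd_mul (continuous_bump r).aestronglyMeasurable <| ae_of_all _ fun y => by
    rw [Real.norm_eq_abs, abs_of_nonneg (bump_nonneg r y)]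
    exact bump_le_one r y

end bump

lemma integral_sub_const_mul_of_integral_eq_one {α : Type*} [MeasurableSpace α] {μ : Measure α}
    {f m : α → ℝ} (c : ℝ) (hfm : Integrable (fun y => f y * m y) μ) (hm : ∫ y, m y ∂μ = 1) :
    ∫ y, (f y - c) * m y ∂μ = ∫ y, f y * m y ∂μ - c := by
  have hmi : Integrable m μ := .of_integral_ne_zero (by simp [hm])
  simp_rw [sub_mul]
  rw [integral_sub hfm (hmi.const_mul c), integral_const_mul, hm, mul_one]

lemma mul_intervalIntegral_le_integral_mul {f m : ℝ → ℝ} {κ a b : ℝ} (hκ : 0 ≤ κ) (hab : a ≤ b)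
    (hf : ∀ y, 0 ≤ f y) (hm : ∀ y, κ * (Ioo a b).indicator (fun _ => 1) y ≤ m y)
    (hfm : Integrable fun y => f y * m y) :
    κ * ∫ y in a..b, f y ≤ ∫ y, f y * m y := by
  rw [intervalIntegral.integral_of_le hab, integral_Ioc_eq_integral_Ioo, ← integral_const_mul,
    ← integral_indicator measurableSet_Ioo]
  refine integral_mono_of_nonneg (ae_of_all _ fun y => ?_) hfm (ae_of_all _ fun y => ?_)
  · exact indicator_nonneg (fun y _ => mul_nonneg hκ (hf y)) y
  · have hmy := hm y
    by_cases hy : y ∈ Ioo a b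
    · simp only [indicator_of_mem hy, mul_one] at hmy ⊢
      rw [mul_comm]
      exact mul_le_mul_of_nonneg_left hmy (hf y)
    · simp only [indicator_of_notMem hy, mul_zero] at hmy ⊢
      exact mul_nonneg (hf y) hmy

theorem lyapunov_inequality_general (γ κ₀ ρ ε x₁ : ℝ) (hγ : 0 < γ) (hκ : 0 < κ₀)
    (hρ : 0 ≤ ρ) (hε : 0 < ε) (hεx : ε < x₁)
    (m : ℝ → ℝ → ℝ) (hm0 : ∀ x y, 0 ≤ m x y)
    (hm1 : ∀ x, (∫ y, m x y) = 1)
    (hmlb : ∀ x y,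
      κ₀ * Set.indicator (Set.Ioo (x - ε) (x + ε)) (fun _ => (1 : ℝ)) y ≤ m x y)
    (h : ℝ → ℝ) (hh : Continuous h)
    (hcond : 12 * ρ * x₁ ≤ γ * κ₀ * ε ^ 3)
    (ψ₀ : ℝ → ℝ) (hψ : ψ₀ = fun x => (max (1 - x ^ 2 / x₁ ^ 2) 0) ^ 2)
    (β₀ : ℝ) (hβ : β₀ = sInf (h '' Set.Ioo (-x₁) x₁) - γ) :
    ∀ x : ℝ,
      β₀ * ψ₀ x ≤ ρ * deriv ψ₀ x + γ * (∫ y, (ψ₀ y - ψ₀ x) * m x y) + h x * ψ₀ x := by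
  obtain rfl : ψ₀ = bump x₁ := hψ
  intro x
  have hx₁ : 0 < x₁ := hε.trans hεx
  have hψm : Integrable fun y => bump x₁ y * m x y :=
    integrable_bump_mul x₁ (.of_integral_ne_zero (by simp [hm1]))
  rw [integral_sub_const_mul_of_integral_eq_one _ hψm (hm1 x)]
  rcases le_or_gt x₁ |x| with hout | hin
  · rw [bump_eq_zero_of_le_abs hx₁ hout, deriv_bump_eq_zero_of_le_abs hx₁ hout]
    have : 0 ≤ ∫ y, bump x₁ y * m x y :=
      integral_nonneg fun y => mul_nonneg (bump_nonneg x₁ y) (hm0 x y)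
    simp only [mul_zero, sub_zero, zero_add, add_zero]
    positivity
  have hinf : β₀ + γ ≤ h x := by
    rw [hβ, sub_add_cancel]
    exact csInf_le ((isCompact_Icc.image hh).bddBelow.mono (image_mono Ioo_subset_Icc_self))
      ⟨x, abs_lt.mp hin, rfl⟩
  have hdrift : ρ * -(4 / x₁) ≤ ρ * deriv (bump x₁) x :=
    mul_le_mul_of_nonneg_left (neg_le_of_abs_le (abs_deriv_bump_le hx₁ x)) hρ
  have hjump : κ₀ * (ε ^ 3 / (3 * x₁ ^ 2)) ≤ ∫ y, bump x₁ y * m x y :=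
    (mul_le_mul_of_nonneg_left (le_integral_bump_window hε hεx hin) hκ.le).trans
      (mul_intervalIntegral_le_integral_mul hκ.le (by linarith) (bump_nonneg x₁) (hmlb x) hψm)
  have hbalance : ρ * (4 / x₁) ≤ γ * (κ₀ * (ε ^ 3 / (3 * x₁ ^ 2))) := by
    rw [show ρ * (4 / x₁) = 12 * ρ * x₁ / (3 * x₁ ^ 2) by field_simp; ring,
      show γ * (κ₀ * (ε ^ 3 / (3 * x₁ ^ 2))) = γ * κ₀ * ε ^ 3 / (3 * x₁ ^ 2) by ring]
    gcongr
  linarith [mul_le_mul_of_nonneg_right hinf (bump_nonneg x₁ x),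
    mul_le_mul_of_nonneg_left hjump hγ.le]

/-- Lyapunov-type inequality `(L + h)ψ₀ ≥ β₀ ψ₀` for the test function
`ψ₀(x) = ((1 − x²/x₁²)₊)²` and the generator
`Lφ(x) = ρ φ'(x) + γ ∫ (φ(y) − φ(x)) m(x,y) dy`, where
`β₀ = inf_{(−x₁,x₁)} h − γ`, under the kernel lower bound
`m(x,y) ≥ κ₀ 1_{(x−ε,x+ε)}(y)` and the condition `γ κ₀ ε³ ≥ 12 ρ x₁`. -/
theorem lyapunov_inequality (γ κ₀ ρ ε x₁ : ℝ) (hγ : 0 < γ) (hκ : 0 < κ₀)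
    (hρ : 0 ≤ ρ) (hε : 0 < ε) (hεx : ε < x₁)
    (m : ℝ → ℝ → ℝ) (hm : Measurable (Function.uncurry m)) (hm0 : ∀ x y, 0 ≤ m x y)
    (hm1 : ∀ x, (∫ y, m x y) = 1)
    (hmlb : ∀ x y,
      κ₀ * Set.indicator (Set.Ioo (x - ε) (x + ε)) (fun _ => (1 : ℝ)) y ≤ m x y)
    (h : ℝ → ℝ) (hh : Continuous h)
    (hcond : 12 * ρ * x₁ ≤ γ * κ₀ * ε ^ 3)
    (ψ₀ : ℝ → ℝ) (hψ : ψ₀ = fun x => (max (1 - x ^ 2 / x₁ ^ 2) 0) ^ 2)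
    (β₀ : ℝ) (hβ : β₀ = sInf (h '' Set.Ioo (-x₁) x₁) - γ) :
    ∀ x : ℝ,
      β₀ * ψ₀ x ≤ ρ * deriv ψ₀ x + γ * (∫ y, (ψ₀ y - ψ₀ x) * m x y) + h x * ψ₀ x :=
  lyapunov_inequality_general γ κ₀ ρ ε x₁ hγ hκ hρ hε hεx m hm0 hm1 hmlb h hh hcond ψ₀ hψ β₀ hβ
end

section
/- Let 0 < δ ≤ 1 and c ∈ [−1,1]. Then ∫_{max(c−δ,−1)}^{min(c+δ,1)} (1 − z²)² dz ≥ ∫_{1−δ}^{1} (1 − z²)² dz. -/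
/-!
The integrand `f z = (1 - z²)²` is even and decreasing in `|z|` on `[-1, 1]`. The clipped window
always contains the subwindow `[a, a + δ]` with `a = max (c - δ) (-1)`, which lies in `[-1, 1]`,
and `f ≥ 0`, so it suffices to compare windows of the same length `δ`. Reflecting if necessary,
the subwindow's midpoint is nonnegative; then the parts of `[a, a + δ]` and `[1 - δ, 1]` that do
not overlap are `[a, 1 - δ]` and `[a + δ, 1]`, which differ by a shift of `δ` towards the origin,
and that shift can only increase `f`.
-/

open Set MeasureTheory intervalIntegral

theorem Function.Even.apply_le_of_abs_le {f : ℝ → ℝ} (hf : f.Even)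
    (hanti : AntitoneOn f (Icc 0 1)) {x y : ℝ} (hxy : |x| ≤ |y|) (hy : |y| ≤ 1) :
    f y ≤ f x := by
  have hx : |x| ∈ Icc (0 : ℝ) 1 := ⟨abs_nonneg x, hxy.trans hy⟩
  have hy' : |y| ∈ Icc (0 : ℝ) 1 := ⟨abs_nonneg y, hy⟩
  rcases abs_choice x with hx' | hx' <;> rcases abs_choice y with hy'' | hy'' <;>
    simpa only [hx', hy'', hf _] using hanti hx hy' hxy

theorem integral_edge_le_integral_of_even_of_antitoneOn {f : ℝ → ℝ} (hf : f.Even)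
    (hanti : AntitoneOn f (Icc 0 1)) (hcont : Continuous f) {δ a : ℝ} (hδ : 0 ≤ δ)
    (ha : -1 ≤ a) (haδ : a + δ ≤ 1) :
    ∫ z in (1 - δ)..1, f z ≤ ∫ z in a..(a + δ), f z := by
  wlog hmid : 0 ≤ 2 * a + δ generalizing a
  · have hreflect : ∫ z in a..(a + δ), f z = ∫ z in (-a - δ)..(-a - δ + δ), f z := by
      rw [show -a - δ + δ = -a by ring, show -a - δ = -(a + δ) by ring, ← integral_comp_neg]
      simp only [hf _]
    rw [hreflect]
    exact this (by linarith) (by linarith) (by linarith)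
  have hint : ∀ u v : ℝ, IntervalIntegrable f volume u v :=
    fun u v => hcont.intervalIntegrable u v
  have hshift_eq : ∫ z in (a + δ)..1, f (z - δ) = ∫ z in a..(1 - δ), f z := by
    rw [integral_comp_sub_right, add_sub_cancel_right]
  have hleft := integral_add_adjacent_intervals (hint a (a + δ)) (hint (a + δ) 1)
  have hright := integral_add_adjacent_intervals (hint a (1 - δ)) (hint (1 - δ) 1)
  have hshift : ∫ z in (a + δ)..1, f z ≤ ∫ z in (a + δ)..1, f (z - δ) := by
    refine integral_mono_on haδ (hint _ _)
      ((hcont.comp (continuous_sub_right δ)).intervalIntegrable _ _)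
      fun z hz => hf.apply_le_of_abs_le hanti ?_ ?_
    · rw [abs_le, abs_of_nonneg (by linarith [hz.1])]
      constructor <;> linarith [hz.1]
    · rw [abs_le]
      constructor <;> linarith [hz.1, hz.2]
  linarith

/-- For `0 < δ ≤ 1` and `c ∈ [−1,1]`, the integral of `(1 − z²)²` over the window
`(c−δ, c+δ) ∩ (−1, 1)` is at least the integral of `(1 − z²)²` over `(1−δ, 1)`:
the worst case for the window is when its center sits at the boundary of `(−1,1)`. -/
theorem window_integral_ge_edge (δ c : ℝ) (hδ0 : 0 < δ) (hδ1 : δ ≤ 1)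
    (hc : c ∈ Set.Icc (-1 : ℝ) 1) :
    (∫ z in (1 - δ)..1, (1 - z ^ 2) ^ 2)
      ≤ ∫ z in (max (c - δ) (-1))..(min (c + δ) 1), (1 - z ^ 2) ^ 2 := by
  set f : ℝ → ℝ := fun z => (1 - z ^ 2) ^ 2
  have hf : f.Even := fun z => by simp only [f, neg_sq]
  have hanti : AntitoneOn f (Icc 0 1) := fun x hx y hy hxy =>
    pow_le_pow_left₀ (by nlinarith [hy.1, hy.2]) (by nlinarith [hx.1]) 2
  have hcont : Continuous f := by fun_prop
  set a := max (c - δ) (-1)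
  have haδ : a + δ ≤ min (c + δ) 1 := by
    suffices a ≤ min (c + δ) 1 - δ by linarith
    exact max_le (by simp only [le_sub_iff_add_le, le_min_iff]; constructor <;> linarith [hc.2])
      (by simp only [le_sub_iff_add_le, le_min_iff]; constructor <;> linarith [hc.1])
  calc ∫ z in (1 - δ)..1, f z
      ≤ ∫ z in a..(a + δ), f z :=
        integral_edge_le_integral_of_even_of_antitoneOn hf hanti hcont hδ0.le (le_max_right _ _)
          (haδ.trans (min_le_right _ _))
    _ ≤ ∫ z in a..(min (c + δ) 1), f z :=
        integral_mono_interval le_rfl (by linarith) haδ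
          (Filter.Eventually.of_forall fun z => by positivity) (hcont.intervalIntegrable _ _)
end

section
/- Let q ≥ 1 be an integer, γ > 0, ρ ∈ ℝ, c ∈ ℝ and x₀ > 0. Let m : ℝ × ℝ → [0,∞) be measurable with ∫_ℝ m(x,y) dy = 1 for every x ∈ ℝ and m_{2q} := sup_{x∈ℝ} ∫_ℝ y^{2q} m(x,y) dy < ∞. Let h : ℝ → ℝ be continuous with h(x) ≤ c for all x and h(x) ≤ −|x|^q for all |x| ≥ x₀. Let λ > 0 and let F : ℝ → [0,∞) be Lebesgue integrable with ∫_ℝ |h(x)| F(x) dx < ∞, and suppose that for every continuously differentiable φ : ℝ → ℝ with φ and φ' bounded: λ ∫_ℝ φ(x) F(x) dx = ∫_ℝ (Lφ(x) + h(x)φ(x)) F(x) dx, where Lφ(x) = ρ φ'(x) + γ ∫_ℝ (φ(y) − φ(x)) m(x,y) dy. Then ∫_ℝ x^{2q} F(x) dx < ∞. -/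
open MeasureTheory Filter
open scoped ENNReal Topology

/-!
Test the eigen-equation against the truncated powers `P_R x = x^(2q) / (1 + x^(2q) / R)`: bounded
`C¹` functions that increase to `x^(2q)` as `R → ∞`. Mutation keeps `∫ P_R(y) m(x,y) dy` below the
uniform `2q`-th moment bound `B`. Since `|x P_R'(x)| ≤ 2q P_R(x)`, far from the origin the drift
`ρ P_R'` is at most `P_R / 2` while `h ≤ -|x|^q ≤ -2` there; near the origin everything is bounded.
So `ρ P_R' + h P_R ≤ C - P_R` with `C` independent of `R`, and the equation yields
`(1 + γ + λ) ∫ P_R F ≤ (C + γ B) ∫ F`. Fatou's lemma lets `R → ∞`.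
-/

noncomputable def truncPow (n : ℕ) (R x : ℝ) : ℝ := x ^ n / (1 + x ^ n / R)

section truncPow

variable {n : ℕ} {R : ℝ}

lemma one_le_one_add_pow_div (hn : Even n) (hR : 0 < R) (x : ℝ) : 1 ≤ 1 + x ^ n / R :=
  le_add_of_nonneg_right (div_nonneg (hn.pow_nonneg x) hR.le)

lemma truncPow_nonneg (hn : Even n) (hR : 0 < R) (x : ℝ) : 0 ≤ truncPow n R x :=
  div_nonneg (hn.pow_nonneg x) (zero_le_one.trans (one_le_one_add_pow_div hn hR x))

lemma truncPow_le_pow (hn : Even n) (hR : 0 < R) (x : ℝ) : truncPow n R x ≤ x ^ n :=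
  div_le_self (hn.pow_nonneg x) (one_le_one_add_pow_div hn hR x)

lemma truncPow_le (hn : Even n) (hR : 0 < R) (x : ℝ) : truncPow n R x ≤ R := by
  have hd := one_le_one_add_pow_div hn hR x
  rw [truncPow, div_le_iff₀ (by linarith), mul_add, mul_div_cancel₀ _ hR.ne']
  linarith

lemma hasDerivAt_truncPow (hn : Even n) (hR : 0 < R) (x : ℝ) :
    HasDerivAt (truncPow n R) (n * x ^ (n - 1) / (1 + x ^ n / R) ^ 2) x := by
  have hd : 0 < 1 + x ^ n / R := by linarith [one_le_one_add_pow_div hn hR x]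
  have hpow := hasDerivAt_pow n x
  refine (hpow.div ((hpow.div_const R).const_add 1) hd.ne').congr_deriv ?_
  field_simp
  ring

lemma contDiff_truncPow (hn : Even n) (hR : 0 < R) : ContDiff ℝ 1 (truncPow n R) :=
  (contDiff_id.pow n).div (contDiff_const.add ((contDiff_id.pow n).div_const R))
    fun x => (zero_lt_one.trans_le (one_le_one_add_pow_div hn hR x)).ne'

lemma abs_deriv_truncPow_le_pow (hn : Even n) (hR : 0 < R) (x : ℝ) :
    |deriv (truncPow n R) x| ≤ n * |x| ^ (n - 1) := by
  have hd := one_le_one_add_pow_div hn hR x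
  rw [(hasDerivAt_truncPow hn hR x).deriv, abs_div, abs_mul, abs_pow, abs_pow, Nat.abs_cast,
    abs_of_pos (by linarith : (0 : ℝ) < 1 + x ^ n / R)]
  exact div_le_self (by positivity) (one_le_pow₀ hd)

lemma abs_mul_abs_deriv_truncPow_le (hn : Even n) (hR : 0 < R) (x : ℝ) :
    |x| * |deriv (truncPow n R) x| ≤ n * truncPow n R x := by
  have hd := one_le_one_add_pow_div hn hR x
  have hpow : (n : ℝ) * |x| ^ (n - 1) * |x| = n * x ^ n := by
    rcases Nat.eq_zero_or_pos n with rfl | hpos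
    · simp
    · rw [mul_assoc, ← pow_succ, Nat.sub_add_cancel hpos, hn.pow_abs]
  rw [(hasDerivAt_truncPow hn hR x).deriv, abs_div, abs_mul, abs_pow, abs_pow, Nat.abs_cast,
    abs_of_pos (by linarith : (0 : ℝ) < 1 + x ^ n / R), truncPow, mul_div_assoc', mul_comm,
    hpow, mul_div_assoc]
  gcongr
  · exact hn.pow_nonneg x
  · exact le_self_pow₀ hd two_ne_zero

lemma abs_deriv_truncPow_le (hn : Even n) (hR : 0 < R) (x : ℝ) :
    |deriv (truncPow n R) x| ≤ n * (R + 1) := by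
  rcases le_total |x| 1 with hx | hx
  · calc |deriv (truncPow n R) x| ≤ n * |x| ^ (n - 1) := abs_deriv_truncPow_le_pow hn hR x
      _ ≤ n * (R + 1) := by
        gcongr
        linarith [pow_le_one₀ (abs_nonneg x) hx (n := n - 1)]
  · calc |deriv (truncPow n R) x| ≤ |x| * |deriv (truncPow n R) x| :=
          le_mul_of_one_le_left (abs_nonneg _) hx
      _ ≤ n * truncPow n R x := abs_mul_abs_deriv_truncPow_le hn hR x
      _ ≤ n * (R + 1) := by gcongr; linarith [truncPow_le hn hR x]

lemma exists_abs_truncPow_le_and_abs_deriv_le (hn : Even n) (hR : 0 < R) :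
    ∃ C, ∀ x, |truncPow n R x| ≤ C ∧ |deriv (truncPow n R) x| ≤ C := by
  refine ⟨n * (R + 1) + R, fun x => ⟨?_, ?_⟩⟩
  · rw [abs_of_nonneg (truncPow_nonneg hn hR x)]
    linarith [truncPow_le hn hR x, (by positivity : (0 : ℝ) ≤ n * (R + 1))]
  · linarith [abs_deriv_truncPow_le hn hR x]

lemma integrable_truncPow_mul (hn : Even n) (hR : 0 < R) {μ : Measure ℝ} {F : ℝ → ℝ}
    (hF : Integrable F μ) : Integrable (fun x => truncPow n R x * F x) μ :=
  hF.bdd_mul (contDiff_truncPow hn hR).continuous.aestronglyMeasurable (ae_of_all _ fun x => by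
    rw [Real.norm_of_nonneg (truncPow_nonneg hn hR x)]
    exact truncPow_le hn hR x)

lemma tendsto_truncPow (x : ℝ) : Tendsto (fun R => truncPow n R x) atTop (𝓝 (x ^ n)) := by
  have hden : Tendsto (fun R => 1 + x ^ n / R) atTop (𝓝 1) := by
    simpa using ((tendsto_const_nhds (x := x ^ n)).div_atTop tendsto_id).const_add 1
  simpa [truncPow, Pi.div_def] using (tendsto_const_nhds (x := x ^ n)).div hden one_ne_zero

end truncPow

lemma exists_drift_add_mul_truncPow_le {n q : ℕ} (hn : Even n) (hq : 1 ≤ q) (ρ c x₀ : ℝ)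
    {h : ℝ → ℝ} (hhc : ∀ x, h x ≤ c) (hhq : ∀ x, x₀ ≤ |x| → h x ≤ -|x| ^ q) :
    ∃ C, ∀ R, 0 < R → ∀ x,
      ρ * deriv (truncPow n R) x + h x * truncPow n R x ≤ C - truncPow n R x := by
  set M := max x₀ (max 2 (2 * n * |ρ|))
  have hM2 : 2 ≤ M := (le_max_left _ _).trans (le_max_right _ _)
  refine ⟨|ρ| * n * M ^ (n - 1) + (|c| + 1) * M ^ n, fun R hR x => ?_⟩
  set P := truncPow n R x
  have hP0 : 0 ≤ P := truncPow_nonneg hn hR x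
  have habs : ρ * deriv (truncPow n R) x ≤ |ρ| * |deriv (truncPow n R) x| :=
    (le_abs_self _).trans (abs_mul _ _).le
  rcases le_total M |x| with hxM | hxM
  · have hx2 : 2 ≤ |x| := hM2.trans hxM
    have hρx : 2 * n * |ρ| ≤ |x| := ((le_max_right _ _).trans (le_max_right _ _)).trans hxM
    have hdrift_far : |ρ| * |deriv (truncPow n R) x| ≤ P / 2 := by
      refine le_of_mul_le_mul_left ?_ (by linarith : (0 : ℝ) < |x|)
      calc |x| * (|ρ| * |deriv (truncPow n R) x|)
          = |ρ| * (|x| * |deriv (truncPow n R) x|) := by ring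
        _ ≤ |ρ| * (n * P) :=
          mul_le_mul_of_nonneg_left (abs_mul_abs_deriv_truncPow_le hn hR x) (abs_nonneg ρ)
        _ = (n * |ρ|) * P := by ring
        _ ≤ (|x| / 2) * P := by gcongr; linarith
        _ = |x| * (P / 2) := by ring
    have hconf : h x * P ≤ -2 * P := by
      have hxq : 2 ≤ |x| ^ q := hx2.trans (le_self_pow₀ (by linarith) (by omega))
      have := hhq x ((le_max_left _ _).trans hxM)
      nlinarith
    have hC : 0 ≤ |ρ| * n * M ^ (n - 1) + (|c| + 1) * M ^ n := by positivity
    linarith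
  · have hPM : P ≤ M ^ n :=
      (truncPow_le_pow hn hR x).trans (hn.pow_abs x ▸ pow_le_pow_left₀ (abs_nonneg x) hxM n)
    have hdrift_near : |ρ| * |deriv (truncPow n R) x| ≤ |ρ| * n * M ^ (n - 1) := by
      rw [mul_assoc]
      gcongr
      exact (abs_deriv_truncPow_le_pow hn hR x).trans (by gcongr)
    have hconf : h x * P ≤ |c| * M ^ n :=
      calc h x * P ≤ |c| * P := by gcongr; exact (hhc x).trans (le_abs_self c)
        _ ≤ |c| * M ^ n := by gcongr
    nlinarith

lemma integral_le_toReal_of_lintegral_le {α : Type*} [MeasurableSpace α] {μ : Measure α}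
    {f g : α → ℝ} {B : ℝ≥0∞} (hB : B ≠ ⊤) (hf : AEStronglyMeasurable f μ) (hf0 : ∀ x, 0 ≤ f x)
    (hfg : ∀ x, f x ≤ g x) (hg : ∫⁻ x, ENNReal.ofReal (g x) ∂μ ≤ B) :
    ∫ x, f x ∂μ ≤ B.toReal := by
  rw [integral_eq_lintegral_of_nonneg_ae (ae_of_all _ hf0) hf]
  exact ENNReal.toReal_mono hB
    ((lintegral_mono fun x => ENNReal.ofReal_le_ofReal (hfg x)).trans hg)

lemma integral_sub_mul_eq_integral_mul_sub {α : Type*} [MeasurableSpace α] {μ : Measure α}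
    {φ k : α → ℝ} (hφk : Integrable (fun y => φ y * k y) μ) (hk : ∫ y, k y ∂μ = 1) (a : ℝ) :
    ∫ y, (φ y - a) * k y ∂μ = (∫ y, φ y * k y ∂μ) - a := by
  simp_rw [sub_mul]
  rw [integral_sub hφk ((Integrable.of_integral_ne_zero (by simp [hk])).const_mul a),
    integral_const_mul, hk, mul_one]

lemma integrable_of_tendsto_of_integral_le {μ : Measure ℝ} {G : ℕ → ℝ → ℝ} {f : ℝ → ℝ} {C : ℝ}
    (hGf : ∀ x, Tendsto (fun k => G k x) atTop (𝓝 (f x))) (hG0 : ∀ k x, 0 ≤ G k x)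
    (hG : ∀ k, Integrable (G k) μ) (hGC : ∀ k, ∫ x, G k x ∂μ ≤ C) : Integrable f μ := by
  refine integrable_of_tendsto (ae_of_all _ hGf) (fun k => (hG k).aestronglyMeasurable) ?_
  refine ne_top_of_le_ne_top (ENNReal.ofReal_ne_top (r := C))
    (liminf_le_of_frequently_le' (Frequently.of_forall fun k => ?_))
  rw [← ofReal_integral_norm_eq_lintegral_enorm (hG k)]
  refine ENNReal.ofReal_le_ofReal ((integral_congr_ae (ae_of_all _ fun x => ?_)).trans_le (hGC k))
  exact Real.norm_of_nonneg (hG0 k x)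

lemma integral_mul_le_of_weak_eigen {γ ρ lam C B : ℝ} (hγ : 0 ≤ γ) (hlam : 0 ≤ lam)
    {m : ℝ → ℝ → ℝ} (hm : Measurable (Function.uncurry m)) (hm0 : ∀ x y, 0 ≤ m x y)
    (hm1 : ∀ x, (∫ y, m x y) = 1) {h : ℝ → ℝ} (hh : Continuous h)
    {F : ℝ → ℝ} (hF0 : ∀ x, 0 ≤ F x) (hFi : Integrable F)
    (hhF : Integrable (fun x => |h x| * F x))
    {φ : ℝ → ℝ} (hφ : ContDiff ℝ 1 φ) (hφ0 : ∀ x, 0 ≤ φ x)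
    (hφb : ∃ C, ∀ x, |φ x| ≤ C ∧ |deriv φ x| ≤ C)
    (heig : lam * ∫ x, φ x * F x
        = ∫ x, (ρ * deriv φ x + γ * (∫ y, (φ y - φ x) * m x y) + h x * φ x) * F x)
    (hdrift : ∀ x, ρ * deriv φ x + h x * φ x ≤ C - φ x)
    (hkernel : ∀ x, ∫ y, φ y * m x y ≤ B) :
    ∫ x, φ x * F x ≤ (C + γ * B) * ∫ x, F x := by
  obtain ⟨Cφ, hCφ⟩ := hφb
  have hmφ : ∀ x, Integrable (fun y => φ y * m x y) := fun x =>
    (Integrable.of_integral_ne_zero (by simp [hm1 x])).bdd_mul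
      hφ.continuous.aestronglyMeasurable (ae_of_all _ fun y => (hCφ y).1)
  set K : ℝ → ℝ := fun x => ∫ y, φ y * m x y
  have hK : ∀ x, ‖K x‖ ≤ B := fun x => by
    rw [Real.norm_of_nonneg (integral_nonneg fun y => mul_nonneg (hφ0 y) (hm0 x y))]
    exact hkernel x
  have hKm : StronglyMeasurable K :=
    ((hφ.continuous.measurable.comp measurable_snd).mul hm).stronglyMeasurable.integral_prod_right'
  have hφF : Integrable (fun x => φ x * F x) :=
    hFi.bdd_mul hφ.continuous.aestronglyMeasurable (ae_of_all _ fun x => (hCφ x).1)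
  have hhF' : Integrable (fun x => h x * F x) :=
    hhF.congr' (hh.aestronglyMeasurable.mul hFi.aestronglyMeasurable)
      (ae_of_all _ fun x => by simp [abs_of_nonneg (hF0 x)])
  have hG : Integrable (fun x => ρ * (deriv φ x * F x) + γ * (K x * F x - φ x * F x)
      + φ x * (h x * F x)) :=
    (((hFi.bdd_mul (hφ.continuous_deriv le_rfl).aestronglyMeasurable
      (ae_of_all _ fun x => (hCφ x).2)).const_mul ρ).add
      (((hFi.bdd_mul hKm.aestronglyMeasurable (ae_of_all _ hK)).sub hφF).const_mul γ)).add
      (hhF'.bdd_mul hφ.continuous.aestronglyMeasurable (ae_of_all _ fun x => (hCφ x).1))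
  have hGle : lam * ∫ x, φ x * F x ≤ ∫ x, ((C + γ * B) * F x - (1 + γ) * (φ x * F x)) := by
    rw [heig]
    refine integral_mono (hG.congr (ae_of_all _ fun x => ?_)) ((hFi.const_mul _).sub
      (hφF.const_mul _)) fun x => ?_
    · simp only [integral_sub_mul_eq_integral_mul_sub (hmφ x) (hm1 x), K]
      ring
    · simp only [integral_sub_mul_eq_integral_mul_sub (hmφ x) (hm1 x)]
      have := mul_le_mul_of_nonneg_left ((le_abs_self _).trans (hK x)) hγ
      nlinarith [hdrift x, hF0 x]
  rw [integral_sub (hFi.const_mul _) (hφF.const_mul _), integral_const_mul,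
    integral_const_mul] at hGle
  have hS : 0 ≤ ∫ x, φ x * F x := integral_nonneg fun x => mul_nonneg (hφ0 x) (hF0 x)
  nlinarith

theorem stationary_density_moment_general (q : ℕ) (hq : 1 ≤ q) (γ ρ c x₀ : ℝ)
    (hγ : 0 < γ)
    (m : ℝ → ℝ → ℝ) (hm : Measurable (Function.uncurry m)) (hm0 : ∀ x y, 0 ≤ m x y)
    (hm1 : ∀ x, (∫ y, m x y) = 1)
    (hm2q : ∃ B : ℝ≥0∞, B < ⊤ ∧
      ∀ x, (∫⁻ y, ENNReal.ofReal (y ^ (2 * q) * m x y)) ≤ B)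
    (h : ℝ → ℝ) (hh : Continuous h) (hhc : ∀ x, h x ≤ c)
    (hhq : ∀ x, x₀ ≤ |x| → h x ≤ -|x| ^ q)
    (lam : ℝ) (hlam : 0 < lam)
    (F : ℝ → ℝ) (hF0 : ∀ x, 0 ≤ F x) (hFi : Integrable F)
    (hhF : Integrable (fun x => |h x| * F x))
    (heig : ∀ φ : ℝ → ℝ, ContDiff ℝ 1 φ →
      (∃ C, ∀ x, |φ x| ≤ C ∧ |deriv φ x| ≤ C) →
      lam * ∫ x, φ x * F x
        = ∫ x, (ρ * deriv φ x + γ * (∫ y, (φ y - φ x) * m x y) + h x * φ x) * F x) :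
    Integrable (fun x => x ^ (2 * q) * F x) := by
  obtain ⟨B, hB, hmB⟩ := hm2q
  have hn : Even (2 * q) := even_two_mul q
  obtain ⟨C, hdrift⟩ := exists_drift_add_mul_truncPow_le hn hq ρ c x₀ hhc hhq
  have hR : ∀ k : ℕ, (0 : ℝ) < k + 1 := fun k => by positivity
  have hP (k : ℕ) := contDiff_truncPow hn (hR k)
  have hPb (k : ℕ) := exists_abs_truncPow_le_and_abs_deriv_le hn (hR k)
  have hkernel (k : ℕ) (x : ℝ) : ∫ y, truncPow (2 * q) (k + 1) y * m x y ≤ B.toReal :=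
    integral_le_toReal_of_lintegral_le hB.ne
      ((hP k).continuous.aestronglyMeasurable.mul hm.of_uncurry_left.aestronglyMeasurable)
      (fun y => mul_nonneg (truncPow_nonneg hn (hR k) y) (hm0 x y))
      (fun y => mul_le_mul_of_nonneg_right (truncPow_le_pow hn (hR k) y) (hm0 x y)) (hmB x)
  refine integrable_of_tendsto_of_integral_le (G := fun k x => truncPow (2 * q) (k + 1) x * F x)
    (C := (C + γ * B.toReal) * ∫ x, F x) (fun x => ?_)
    (fun k x => mul_nonneg (truncPow_nonneg hn (hR k) x) (hF0 x))
    (fun k => integrable_truncPow_mul hn (hR k) hFi) (fun k => ?_)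
  · exact ((tendsto_truncPow x).comp
      (tendsto_natCast_atTop_atTop.atTop_add tendsto_const_nhds)).mul_const (F x)
  · exact integral_mul_le_of_weak_eigen hγ.le hlam.le hm hm0 hm1 hh hF0 hFi hhF (hP k)
      (truncPow_nonneg hn (hR k)) (hPb k) (heig _ (hP k) (hPb k)) (hdrift _ (hR k)) (hkernel k)

/-- If `F ≥ 0` is an integrable weak eigenfunction, with eigenvalue `λ > 0`, of the
operator `L* + h` (formulated in duality against `C¹` test functions bounded together
with their derivative, via the generator `Lφ(x) = ρφ'(x) + γ∫(φ(y)−φ(x))m(x,y)dy`),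
where `h` is continuous, bounded above by `c`, and `h(x) ≤ −|x|^q` for `|x| ≥ x₀`,
and the kernel `m` has uniformly bounded `2q`-th moments, then `F` has a finite moment
of order `2q`: `∫ x^{2q} F(x) dx < ∞`. -/
theorem stationary_density_moment (q : ℕ) (hq : 1 ≤ q) (γ ρ c x₀ : ℝ)
    (hγ : 0 < γ) (hx₀ : 0 < x₀)
    (m : ℝ → ℝ → ℝ) (hm : Measurable (Function.uncurry m)) (hm0 : ∀ x y, 0 ≤ m x y)
    (hm1 : ∀ x, (∫ y, m x y) = 1)
    (hm2q : ∃ B : ℝ≥0∞, B < ⊤ ∧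
      ∀ x, (∫⁻ y, ENNReal.ofReal (y ^ (2 * q) * m x y)) ≤ B)
    (h : ℝ → ℝ) (hh : Continuous h) (hhc : ∀ x, h x ≤ c)
    (hhq : ∀ x, x₀ ≤ |x| → h x ≤ -|x| ^ q)
    (lam : ℝ) (hlam : 0 < lam)
    (F : ℝ → ℝ) (hF0 : ∀ x, 0 ≤ F x) (hFi : Integrable F)
    (hhF : Integrable (fun x => |h x| * F x))
    (heig : ∀ φ : ℝ → ℝ, ContDiff ℝ 1 φ →
      (∃ C, ∀ x, |φ x| ≤ C ∧ |deriv φ x| ≤ C) →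
      lam * ∫ x, φ x * F x
        = ∫ x, (ρ * deriv φ x + γ * (∫ y, (φ y - φ x) * m x y) + h x * φ x) * F x) :
    Integrable (fun x => x ^ (2 * q) * F x) :=
  stationary_density_moment_general q hq γ ρ c x₀ hγ m hm hm0 hm1 hm2q h hh hhc hhq lam hlam F hF0
    hFi hhF heig
end

section
/- Let T > 0 and let a : [0,T] → [0,∞) be continuous. Then there exists a continuous function F : [0,T] → ℝ with 0 ≤ F(t) ≤ sup_{0≤s≤T} a(s) for all t, such that for every t ∈ [0,T]: F(t) = exp(−∫_0^t F(u) du) · a(t). -/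
/-!
With `G t = ∫₀ᵗ F`, the equation reads `G' = e^{-G} a`, i.e. `(e^G)' = a`, so
`e^G = 1 + ∫₀ᵗ a` and `F = a / (1 + ∫₀ᵗ a)` is an explicit solution. It lies between `0`
and `a` because the denominator is at least `1`. To apply the fundamental theorem of
calculus on all of `ℝ`, `a` is first extended constantly outside `[0, T]`.
-/

open MeasureTheory intervalIntegral Set

noncomputable def divOneAddPrimitive (b : ℝ → ℝ) (t : ℝ) : ℝ :=
  b t / (1 + ∫ u in (0 : ℝ)..t, b u)

section

variable {b : ℝ → ℝ}

theorem one_add_primitive_pos (hb₀ : ∀ u, 0 ≤ b u) {t : ℝ} (ht : 0 ≤ t) :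
    0 < 1 + ∫ u in (0 : ℝ)..t, b u := by
  have : 0 ≤ ∫ u in (0 : ℝ)..t, b u := integral_nonneg ht fun u _ => hb₀ u
  linarith

theorem divOneAddPrimitive_nonneg (hb₀ : ∀ u, 0 ≤ b u) {t : ℝ} (ht : 0 ≤ t) :
    0 ≤ divOneAddPrimitive b t :=
  div_nonneg (hb₀ t) (one_add_primitive_pos hb₀ ht).le

theorem divOneAddPrimitive_le (hb₀ : ∀ u, 0 ≤ b u) {t : ℝ} (ht : 0 ≤ t) :
    divOneAddPrimitive b t ≤ b t :=
  div_le_self (hb₀ t) (le_add_of_nonneg_right (integral_nonneg ht fun u _ => hb₀ u))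

theorem continuousOn_divOneAddPrimitive (hb : Continuous b) (hb₀ : ∀ u, 0 ≤ b u) :
    ContinuousOn (divOneAddPrimitive b) (Ici 0) :=
  hb.continuousOn.div
    (continuous_const.add (continuous_primitive hb.intervalIntegrable 0)).continuousOn
    fun _ ht => (one_add_primitive_pos hb₀ ht).ne'

theorem integral_divOneAddPrimitive (hb : Continuous b) (hb₀ : ∀ u, 0 ≤ b u) {t : ℝ}
    (ht : 0 ≤ t) :
    ∫ u in (0 : ℝ)..t, divOneAddPrimitive b u = Real.log (1 + ∫ u in (0 : ℝ)..t, b u) := by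
  have hsub : uIcc 0 t ⊆ Ici 0 := by
    rw [uIcc_of_le ht]
    exact Icc_subset_Ici_self
  have hderiv : ∀ u ∈ uIcc 0 t,
      HasDerivAt (fun s => Real.log (1 + ∫ v in (0 : ℝ)..s, b v)) (divOneAddPrimitive b u) u :=
    fun u hu => ((hb.integral_hasStrictDerivAt 0 u).hasDerivAt.const_add 1).log
      (one_add_primitive_pos hb₀ (hsub hu)).ne'
  rw [integral_eq_sub_of_hasDerivAt hderiv
    ((continuousOn_divOneAddPrimitive hb hb₀).mono hsub).intervalIntegrable]
  simp

theorem divOneAddPrimitive_eq_exp_neg_integral_mul (hb : Continuous b) (hb₀ : ∀ u, 0 ≤ b u)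
    {t : ℝ} (ht : 0 ≤ t) :
    divOneAddPrimitive b t = Real.exp (-∫ u in (0 : ℝ)..t, divOneAddPrimitive b u) * b t := by
  rw [integral_divOneAddPrimitive hb hb₀ ht, Real.exp_neg,
    Real.exp_log (one_add_primitive_pos hb₀ ht), inv_mul_eq_div, divOneAddPrimitive]

end

/-- Fixed-point existence: for `T > 0` and a continuous `a : [0,T] → [0,∞)`, there
exists a continuous `F : [0,T] → ℝ` with `0 ≤ F(t) ≤ sup_{[0,T]} a`, such that
`F(t) = exp(−∫_0^t F(u) du) · a(t)` for every `t ∈ [0,T]`. -/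
theorem fixed_point_exists (T : ℝ) (hT : 0 < T) (a : ℝ → ℝ)
    (ha : ContinuousOn a (Set.Icc 0 T)) (ha0 : ∀ t ∈ Set.Icc (0 : ℝ) T, 0 ≤ a t) :
    ∃ F : ℝ → ℝ, ContinuousOn F (Set.Icc 0 T) ∧
      (∀ t ∈ Set.Icc (0 : ℝ) T, 0 ≤ F t ∧ F t ≤ sSup (a '' Set.Icc 0 T)) ∧
      ∀ t ∈ Set.Icc (0 : ℝ) T, F t = Real.exp (-∫ u in (0 : ℝ)..t, F u) * a t := by
  set b := IccExtend hT.le ((Icc 0 T).domRestrict a)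
  have hb : Continuous b := continuous_IccExtend_iff.mpr ha.domRestrict
  have hb₀ : ∀ u, 0 ≤ b u := fun u => ha0 _ (projIcc 0 T hT.le u).2
  have hba : ∀ t ∈ Icc 0 T, b t = a t := fun t ht => IccExtend_of_mem hT.le _ ht
  refine ⟨divOneAddPrimitive b,
    (continuousOn_divOneAddPrimitive hb hb₀).mono Icc_subset_Ici_self,
    fun t ht => ⟨divOneAddPrimitive_nonneg hb₀ ht.1, ?_⟩, fun t ht => ?_⟩
  · calc divOneAddPrimitive b t ≤ b t := divOneAddPrimitive_le hb₀ ht.1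
      _ = a t := hba t ht
      _ ≤ sSup (a '' Icc 0 T) := le_csSup (isCompact_Icc.bddAbove_image ha) ⟨t, ht, rfl⟩
  · rw [← hba t ht]
    exact divOneAddPrimitive_eq_exp_neg_integral_mul hb hb₀ ht.1
end
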